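/- arXiv:2005.10403 — 3 statements merged into one kernel-verified Lean document; each statement's English description precedes it below -/
import Mathlib

section
/- Let α > 0 be a non-integer real number, let [[α]] denote the largest integer strictly smaller than α and {{α}} := α − [[α]] ∈ (0,1]. Suppose f : ℝ → ℂ is continuous and integrable, and there is a constant C > 0 such that its Fourier transform f̂(ξ) = ∫_ℝ f(t) e^{−iξt} dt satisfies |f̂(ξ)| ≤ C/|ξ|^{α+1} for all ξ ≠ 0. Then f is [[α]] times differentiable on ℝ, every derivative f^{(m)} with 0 ≤ m ≤ [[α]] is bounded on ℝ, and there exists a constant A > 0 such that |f^{([[α]])}(s) − f^{([[α]])}(t)| ≤ A·|s − t|^{{{α}}} for all s, t ∈ ℝ; that is, f belongs to the Lipschitz class Lip(α, ℝ). -/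
/-!
Mathlib normalises `𝓕 f w = f̂(2πw)`, and `h x = 𝓕 f (-x)` is bounded and decays like
`|x|^{-(α+1)}`, so `xⁿ h x` is integrable for `n < α`. Fourier inversion gives `f = 𝓕 h`, and
differentiating under the integral sign gives `f⁽ⁿ⁾ = 𝓕 ((-2πix)ⁿ h)` for `n ≤ ⌊α⌋`, a bounded
function. With `β = α - ⌊α⌋ ∈ (0, 1)`, `g = (-2πix)^⌊α⌋ h` decays like `|x|^{-(1+β)}`, and
`|e(-xs) - e(-xt)| ≤ 2π min(1, |x| |s - t|)`; the substitution `y = |s - t| x` bounds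
`|𝓕 g s - 𝓕 g t|` by `|s - t|^β` times the finite integral of `min(1, |y|) |y|^{-(1+β)}`.
-/

open MeasureTheory Set Filter

/-- The Fourier transform `f̂(ξ) = ∫ f(t) e^{-iξt} dt`. -/
noncomputable def fourierT (f : ℝ → ℂ) (ξ : ℝ) : ℂ :=
  ∫ t : ℝ, f t * Complex.exp (-Complex.I * ξ * t)

open scoped FourierTransform Real

section Integrability

variable {E : Type*} [NormedAddCommGroup E]

theorem integrable_comp_abs_of_integrableOn_Ioi {φ : ℝ → E} (h : IntegrableOn φ (Ioi 0)) :
    Integrable (fun x => φ |x|) := by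
  have hIoi : IntegrableOn (fun x => φ |x|) (Ioi 0) :=
    h.congr_fun (fun x hx => by rw [abs_of_pos hx]) measurableSet_Ioi
  have hIic : IntegrableOn (fun x => φ |x|) (Iic 0) := by
    rw [← Measure.map_neg_eq_self (volume : Measure ℝ),
      measurableEmbedding_neg.integrableOn_map_iff]
    simp only [Function.comp_def, abs_neg, neg_preimage, neg_Iic, neg_zero]
    exact (integrableOn_Ici_iff_integrableOn_Ioi).mpr hIoi
  simpa only [← integrableOn_univ, ← Iic_union_Ioi (a := (0 : ℝ))] using hIic.union hIoi

theorem integrable_of_norm_le_abs_rpow {u : ℝ → E} (hu : AEStronglyMeasurable u)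
    {a b s t : ℝ} (hs : -1 < s) (ht : t < -1)
    (hsmall : ∀ x, |x| ≤ 1 → ‖u x‖ ≤ a * |x| ^ s)
    (hlarge : ∀ x, 1 < |x| → ‖u x‖ ≤ b * |x| ^ t) :
    Integrable u := by
  set ψ : ℝ → ℝ := (Icc 0 1).indicator (fun y => a * y ^ s) + (Ioi 1).indicator (fun y => b * y ^ t)
  have hψ : Integrable ψ := by
    refine Integrable.add ?_ ?_
    · refine IntegrableOn.integrable_indicator ?_ measurableSet_Icc
      refine Integrable.const_mul ?_ a
      exact (intervalIntegrable_iff_integrableOn_Icc_of_le zero_le_one).mp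
        (intervalIntegral.intervalIntegrable_rpow' hs)
    · exact IntegrableOn.integrable_indicator
        ((integrableOn_Ioi_rpow_of_lt ht one_pos).const_mul b) measurableSet_Ioi
  refine (integrable_comp_abs_of_integrableOn_Ioi hψ.integrableOn).mono' hu
    (ae_of_all _ fun x => ?_)
  rcases le_or_gt |x| 1 with hx | hx
  · simpa [ψ, hx, not_lt.mpr hx] using hsmall x hx
  · simpa [ψ, hx, not_le.mpr hx] using hlarge x hx

end Integrability

theorem norm_fourierChar_sub_le (a b : ℝ) :
    ‖(𝐞 a : ℂ) - 𝐞 b‖ ≤ 2 * π * min 1 |a - b| := by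
  have hfactor : (𝐞 a : ℂ) - 𝐞 b = 𝐞 b * (𝐞 (a - b) - 1) := by
    rw [mul_sub, mul_one, ← Circle.coe_mul, ← AddChar.map_add_eq_mul, add_sub_cancel]
  rw [hfactor, norm_mul, Circle.norm_coe, one_mul, mul_min_of_nonneg _ _ Real.two_pi_pos.le,
    mul_one]
  refine le_min ?_ ?_
  · calc ‖(𝐞 (a - b) : ℂ) - 1‖ ≤ ‖(𝐞 (a - b) : ℂ)‖ + ‖(1 : ℂ)‖ := norm_sub_le _ _
      _ = 2 := by rw [Circle.norm_coe, norm_one]; norm_num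
      _ ≤ 2 * π := by linarith [Real.pi_gt_three]
  · calc ‖(𝐞 (a - b) : ℂ) - 1‖ = ‖Complex.exp (Complex.I * ↑(2 * π * (a - b))) - 1‖ := by
          rw [Real.fourierChar_apply, mul_comm Complex.I]
      _ ≤ ‖2 * π * (a - b)‖ := Real.norm_exp_I_mul_ofReal_sub_one_le
      _ = 2 * π * |a - b| := by
          rw [Real.norm_eq_abs, abs_mul, abs_of_pos Real.two_pi_pos]

theorem exists_norm_fourier_sub_le_rpow {E : Type*} [NormedAddCommGroup E] [NormedSpace ℂ E]
    {g : ℝ → E} (hg : Integrable g) {β c : ℝ} (hβ0 : 0 < β) (hβ1 : β < 1)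
    (hdecay : ∀ x ≠ 0, ‖g x‖ ≤ c * |x| ^ (-(1 + β))) :
    ∃ A, ∀ s t, ‖𝓕 g s - 𝓕 g t‖ ≤ A * |s - t| ^ β := by
  set φ : ℝ → ℝ := fun y => min 1 |y| * |y| ^ (-(1 + β))
  have hφ : Integrable φ := by
    refine integrable_of_norm_le_abs_rpow (a := 1) (b := 1) (s := -β) (t := -(1 + β))
      (by fun_prop) (by linarith) (by linarith) (fun y hy => ?_) (fun y hy => ?_)
    · rw [Real.norm_of_nonneg (by positivity)]
      rcases eq_or_ne y 0 with rfl | hy0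
      · simp only [φ, abs_zero, min_eq_right zero_le_one, zero_mul]
        positivity
      simp only [φ]
      rw [min_eq_right hy, one_mul, ← Real.rpow_one_add' (abs_nonneg y) (by linarith),
        show 1 + -(1 + β) = -β by ring]
    · simp only [φ]
      rw [Real.norm_of_nonneg (by positivity), min_eq_left hy.le, one_mul]
  refine ⟨2 * π * c * ∫ y, φ y, fun s t => ?_⟩
  rcases eq_or_ne s t with rfl | hst
  · simp [Real.zero_rpow hβ0.ne']
  set δ := |s - t|
  have hδ : 0 < δ := abs_pos.mpr (sub_ne_zero.mpr hst)
  have hpoint : ∀ x, ‖((𝐞 (-(x * s)) : ℂ) - 𝐞 (-(x * t))) • g x‖ ≤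
      2 * π * c * δ ^ (1 + β) * φ (δ * x) := by
    intro x
    rcases eq_or_ne x 0 with rfl | hx
    · simp [φ]
    have hphase : |-(x * s) - -(x * t)| = |δ * x| := by
      rw [show -(x * s) - -(x * t) = -(x * (s - t)) by ring, abs_neg, abs_mul, abs_mul, abs_abs,
        mul_comm]
    have hscale : δ ^ (1 + β) * |δ * x| ^ (-(1 + β)) = |x| ^ (-(1 + β)) := by
      rw [abs_mul, abs_of_pos hδ, Real.mul_rpow hδ.le (abs_nonneg x), ← mul_assoc,
        ← Real.rpow_add hδ, add_neg_cancel, Real.rpow_zero, one_mul]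
    calc ‖((𝐞 (-(x * s)) : ℂ) - 𝐞 (-(x * t))) • g x‖
        = ‖(𝐞 (-(x * s)) : ℂ) - 𝐞 (-(x * t))‖ * ‖g x‖ := norm_smul _ _
      _ ≤ (2 * π * min 1 |δ * x|) * (c * |x| ^ (-(1 + β))) := by
          rw [← hphase]
          exact mul_le_mul (norm_fourierChar_sub_le _ _) (hdecay x hx) (norm_nonneg _)
            (by positivity)
      _ = 2 * π * c * δ ^ (1 + β) * φ (δ * x) := by
          rw [← hscale]; simp only [φ]; ring
  have hsub : 𝓕 g s - 𝓕 g t = ∫ x, ((𝐞 (-(x * s)) : ℂ) - 𝐞 (-(x * t))) • g x := by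
    have hmod : ∀ w, Integrable (fun v : ℝ => 𝐞 (-(v * w)) • g v) := fun w => by
      simpa [mul_comm] using (Real.fourierIntegral_convergent_iff w).mpr hg
    rw [Real.fourier_real_eq, Real.fourier_real_eq, ← integral_sub (hmod s) (hmod t)]
    simp only [sub_smul, Circle.smul_def]
  calc ‖𝓕 g s - 𝓕 g t‖ ≤ ∫ x, 2 * π * c * δ ^ (1 + β) * φ (δ * x) :=
        hsub ▸ norm_integral_le_of_norm_le ((hφ.comp_mul_left' hδ.ne').const_mul _)
          (ae_of_all _ hpoint)
    _ = 2 * π * c * δ ^ (1 + β) * (δ⁻¹ * ∫ y, φ y) := by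
        rw [integral_const_mul, Measure.integral_comp_mul_left, abs_inv, abs_of_pos hδ,
          smul_eq_mul]
    _ = (2 * π * c * ∫ y, φ y) * δ ^ β := by
        rw [Real.rpow_add hδ, Real.rpow_one]
        field_simp

section FourierOfDecaying

variable {E : Type*} [NormedAddCommGroup E] [NormedSpace ℂ E] {h : ℝ → E} {M c α : ℝ}

theorem integrable_pow_smul_of_norm_le_rpow (hmeas : AEStronglyMeasurable h)
    (hM : ∀ x, ‖h x‖ ≤ M) (hdecay : ∀ x ≠ 0, ‖h x‖ ≤ c * |x| ^ (-(α + 1)))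
    {n : ℕ} (hn : (n : ℝ) < α) : Integrable (fun x : ℝ => x ^ n • h x) := by
  refine integrable_of_norm_le_abs_rpow (a := M) (b := c) (s := 0) (t := n + -(α + 1))
    ((continuous_pow n).aestronglyMeasurable.smul hmeas) (by norm_num) (by linarith)
    (fun x hx => ?_) (fun x hx => ?_) <;> rw [norm_smul, norm_pow, Real.norm_eq_abs]
  · rw [Real.rpow_zero, mul_one]
    exact (mul_le_of_le_one_left (norm_nonneg _) (pow_le_one₀ (abs_nonneg x) hx)).trans (hM x)
  · have hx0 : 0 < |x| := one_pos.trans hx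
    calc |x| ^ n * ‖h x‖ ≤ |x| ^ n * (c * |x| ^ (-(α + 1))) :=
          mul_le_mul_of_nonneg_left (hdecay x (abs_pos.mp hx0)) (by positivity)
      _ = c * |x| ^ ((n : ℝ) + -(α + 1)) := by
          rw [Real.rpow_add hx0, Real.rpow_natCast]; ring

theorem contDiff_fourier_of_norm_le_rpow (hmeas : AEStronglyMeasurable h)
    (hM : ∀ x, ‖h x‖ ≤ M) (hdecay : ∀ x ≠ 0, ‖h x‖ ≤ c * |x| ^ (-(α + 1)))
    {k : ℕ} (hk : (k : ℝ) < α) : ContDiff ℝ k (𝓕 h) :=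
  Real.contDiff_fourier fun n hn => by
    simpa [norm_smul] using (integrable_pow_smul_of_norm_le_rpow hmeas hM hdecay
      ((Nat.cast_le.mpr (mod_cast hn)).trans_lt hk)).norm

theorem iteratedDeriv_fourier_of_norm_le_rpow (hmeas : AEStronglyMeasurable h)
    (hM : ∀ x, ‖h x‖ ≤ M) (hdecay : ∀ x ≠ 0, ‖h x‖ ≤ c * |x| ^ (-(α + 1)))
    {n : ℕ} (hn : (n : ℝ) < α) :
    iteratedDeriv n (𝓕 h) = 𝓕 (fun x : ℝ => (-2 * π * Complex.I * x) ^ n • h x) :=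
  Real.iteratedDeriv_fourier (N := n) (fun _ hm => integrable_pow_smul_of_norm_le_rpow hmeas hM
    hdecay ((Nat.cast_le.mpr (mod_cast hm)).trans_lt hn)) le_rfl

theorem norm_iteratedDeriv_fourier_le_of_norm_le_rpow (hmeas : AEStronglyMeasurable h)
    (hM : ∀ x, ‖h x‖ ≤ M) (hdecay : ∀ x ≠ 0, ‖h x‖ ≤ c * |x| ^ (-(α + 1)))
    {n : ℕ} (hn : (n : ℝ) < α) (w : ℝ) :
    ‖iteratedDeriv n (𝓕 h) w‖ ≤ ∫ x, (2 * π * |x|) ^ n * ‖h x‖ := by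
  rw [iteratedDeriv_fourier_of_norm_le_rpow hmeas hM hdecay hn]
  refine (VectorFourier.norm_fourierIntegral_le_integral_norm _ _ _ _ _).trans_eq ?_
  simp [norm_smul, abs_of_pos Real.pi_pos]

theorem exists_norm_iteratedDeriv_fourier_sub_le_rpow (hmeas : AEStronglyMeasurable h)
    (hM : ∀ x, ‖h x‖ ≤ M) (hdecay : ∀ x ≠ 0, ‖h x‖ ≤ c * |x| ^ (-(α + 1)))
    {k : ℕ} (hk : (k : ℝ) < α) (hk' : α < k + 1) :
    ∃ A, ∀ s t, ‖iteratedDeriv k (𝓕 h) s - iteratedDeriv k (𝓕 h) t‖ ≤ A * |s - t| ^ (α - k) := by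
  rw [iteratedDeriv_fourier_of_norm_le_rpow hmeas hM hdecay hk]
  refine exists_norm_fourier_sub_le_rpow (c := (2 * π) ^ k * c) ?_ (by linarith) (by linarith)
    fun x hx => ?_
  · refine ((integrable_pow_smul_of_norm_le_rpow hmeas hM hdecay hk).smul
      ((-2 * π * Complex.I) ^ k)).congr (ae_of_all _ fun x => ?_)
    change (-2 * π * Complex.I) ^ k • x ^ k • h x = (-2 * π * Complex.I * x) ^ k • h x
    rw [mul_pow (-2 * π * Complex.I), mul_smul, ← Complex.ofReal_pow, Complex.coe_smul]
  · have hx0 : 0 < |x| := abs_pos.mpr hx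
    calc ‖(-2 * π * Complex.I * x) ^ k • h x‖ = (2 * π) ^ k * |x| ^ k * ‖h x‖ := by
          simp [norm_smul, abs_of_pos Real.pi_pos, mul_pow]
      _ ≤ (2 * π) ^ k * |x| ^ k * (c * |x| ^ (-(α + 1))) :=
          mul_le_mul_of_nonneg_left (hdecay x hx) (by positivity)
      _ = (2 * π) ^ k * c * |x| ^ (-(1 + (α - k))) := by
          rw [show -(1 + (α - k)) = (k : ℝ) + -(α + 1) by ring, Real.rpow_add hx0,
            Real.rpow_natCast]
          ring

end FourierOfDecaying

theorem floor_toNat_lt_of_forall_ne_intCast {α : ℝ} (hα : 0 ≤ α) (hαnotint : ∀ n : ℤ, α ≠ n) :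
    (⌊α⌋.toNat : ℝ) < α ∧ α < ⌊α⌋.toNat + 1 := by
  rw [Int.floor_toNat]
  exact ⟨(Nat.floor_le hα).lt_of_ne fun h => hαnotint ⌊α⌋₊ (mod_cast h.symm),
    Nat.lt_floor_add_one α⟩

theorem fourierT_two_pi_mul (f : ℝ → ℂ) (w : ℝ) : fourierT f (2 * π * w) = 𝓕 f w := by
  rw [Real.fourier_real_eq_integral_exp_smul, fourierT]
  congr 1 with t
  rw [smul_eq_mul, mul_comm]
  congr 2
  push_cast
  ring

theorem exists_fourier_eq_of_norm_fourierT_le {f : ℝ → ℂ} (hfc : Continuous f)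
    (hfi : Integrable f) {α C : ℝ} (hα : 0 < α)
    (hFT : ∀ ξ : ℝ, ξ ≠ 0 → ‖fourierT f ξ‖ ≤ C / |ξ| ^ (α + 1)) :
    ∃ h : ℝ → ℂ, 𝓕 h = f ∧ Continuous h ∧ (∀ x, ‖h x‖ ≤ ∫ t, ‖f t‖) ∧
      ∀ x ≠ 0, ‖h x‖ ≤ C * (2 * π) ^ (-(α + 1)) * |x| ^ (-(α + 1)) := by
  have hcont : Continuous (𝓕 f) :=
    VectorFourier.fourierIntegral_continuous Real.continuous_fourierChar
      (by exact continuous_inner) hfi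
  have hbound : ∀ w, ‖𝓕 f w‖ ≤ ∫ t, ‖f t‖ := fun w =>
    VectorFourier.norm_fourierIntegral_le_integral_norm _ _ _ _ _
  have hdecay : ∀ w ≠ 0, ‖𝓕 f w‖ ≤ C * (2 * π) ^ (-(α + 1)) * |w| ^ (-(α + 1)) := by
    intro w hw
    refine (fourierT_two_pi_mul f w ▸ hFT _ (mul_ne_zero Real.two_pi_pos.ne' hw)).trans_eq ?_
    rw [abs_mul, abs_of_pos Real.two_pi_pos, Real.mul_rpow Real.two_pi_pos.le (abs_nonneg w),
      Real.rpow_neg Real.two_pi_pos.le, Real.rpow_neg (abs_nonneg w), div_eq_mul_inv, mul_inv,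
      mul_assoc]
  have hint : Integrable (𝓕 f) := by
    simpa using integrable_pow_smul_of_norm_le_rpow hcont.aestronglyMeasurable hbound hdecay
      (n := 0) (by simpa using hα)
  refine ⟨fun x => 𝓕 f (-x), ?_, hcont.comp continuous_neg, fun x => hbound (-x),
    fun x hx => abs_neg x ▸ hdecay (-x) (neg_ne_zero.mpr hx)⟩
  rw [← Real.fourierInv_eq_fourier_comp_neg, hfc.fourierInv_fourier_eq hfi hint]

theorem fourier_decay_implies_Lip_general
    (α : ℝ) (hα : 0 < α) (hαnotint : ∀ n : ℤ, α ≠ (n : ℝ))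
    (f : ℝ → ℂ) (hfc : Continuous f) (hfi : Integrable f)
    (C : ℝ)
    (hFT : ∀ ξ : ℝ, ξ ≠ 0 → ‖fourierT f ξ‖ ≤ C / |ξ| ^ (α + 1)) :
    (∀ m : ℕ, m < ⌊α⌋.toNat → Differentiable ℝ (iteratedDeriv m f)) ∧
    (∀ m : ℕ, m ≤ ⌊α⌋.toNat → ∃ B : ℝ, ∀ t : ℝ, ‖iteratedDeriv m f t‖ ≤ B) ∧
    (∃ A : ℝ, 0 < A ∧ ∀ s t : ℝ,
      ‖iteratedDeriv ⌊α⌋.toNat f s - iteratedDeriv ⌊α⌋.toNat f t‖ ≤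
        A * |s - t| ^ (α - (⌊α⌋.toNat : ℝ))) := by
  obtain ⟨h, rfl, hcont, hM, hdecay⟩ := exists_fourier_eq_of_norm_fourierT_le hfc hfi hα hFT
  have hmeas : AEStronglyMeasurable h := hcont.aestronglyMeasurable
  obtain ⟨hkα, hαk⟩ := floor_toNat_lt_of_forall_ne_intCast hα.le hαnotint
  refine ⟨fun m hm => ?_, fun m hm => ?_, ?_⟩
  · exact (contDiff_fourier_of_norm_le_rpow hmeas hM hdecay hkα).differentiable_iteratedDeriv m
      (mod_cast hm)
  · exact ⟨_, norm_iteratedDeriv_fourier_le_of_norm_le_rpow hmeas hM hdecay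
      ((Nat.cast_le.mpr hm).trans_lt hkα)⟩
  · obtain ⟨A, hA⟩ := exists_norm_iteratedDeriv_fourier_sub_le_rpow hmeas hM hdecay hkα hαk
    exact ⟨max A 1, by positivity, fun s t => (hA s t).trans (by gcongr; exact le_max_left _ _)⟩

/-- If `f : ℝ → ℂ` is continuous and integrable and its Fourier transform
decays like `C/|ξ|^{α+1}` for a non-integer `α > 0`, then `f ∈ Lip(α, ℝ)`:
`f` has derivatives up to order `[[α]] = ⌊α⌋`, these are bounded on `ℝ`, and the
`⌊α⌋`-th derivative is Hölder of order `{{α}} = α - ⌊α⌋`. -/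
theorem fourier_decay_implies_Lip
    (α : ℝ) (hα : 0 < α) (hαnotint : ∀ n : ℤ, α ≠ (n : ℝ))
    (f : ℝ → ℂ) (hfc : Continuous f) (hfi : Integrable f)
    (C : ℝ) (hC : 0 < C)
    (hFT : ∀ ξ : ℝ, ξ ≠ 0 → ‖fourierT f ξ‖ ≤ C / |ξ| ^ (α + 1)) :
    (∀ m : ℕ, m < ⌊α⌋.toNat → Differentiable ℝ (iteratedDeriv m f)) ∧
    (∀ m : ℕ, m ≤ ⌊α⌋.toNat → ∃ B : ℝ, ∀ t : ℝ, ‖iteratedDeriv m f t‖ ≤ B) ∧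
    (∃ A : ℝ, 0 < A ∧ ∀ s t : ℝ,
      ‖iteratedDeriv ⌊α⌋.toNat f s - iteratedDeriv ⌊α⌋.toNat f t‖ ≤
        A * |s - t| ^ (α - (⌊α⌋.toNat : ℝ))) :=
  fourier_decay_implies_Lip_general α hα hαnotint f hfc hfi C hFT
end

section
/- Let α ≥ 1 be an integer. Suppose f : ℝ → ℂ is continuous and integrable, and there is a constant C > 0 such that its Fourier transform f̂(ξ) = ∫_ℝ f(t) e^{−iξt} dt satisfies |f̂(ξ)| ≤ C/|ξ|^{α+1} for all ξ ≠ 0. Then f is (α−1) times continuously differentiable on ℝ, and there exists a constant A > 0 such that the Zygmund condition |f^{(α−1)}(t+h) − 2 f^{(α−1)}(t) + f^{(α−1)}(t−h)| ≤ A·h holds for all t ∈ ℝ and all h > 0; that is, f belongs to the Zygmund class Zyg(α, ℝ). -/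
/-!
Let `g = 𝓕 f` in Mathlib's normalisation `𝓕 f w = ∫ e^{-2πivw} f v dv`, so that
`‖g w‖ ≤ K / |w|^(n+2)` with `n = α - 1`. This decay makes `v^k g v` integrable for `k ≤ n`;
by Fourier inversion `f = 𝓕⁻ g` is then `C^n`, and `f^{(n)}(t) = ± 𝓕 G (-t)` with
`G v = (-2πiv)^n g v`, where `‖G v‖ ≤ K' / v²`.

The second difference of `𝓕 G` with step `h` is the Fourier transform of
`(2 cos (2πvh) - 2) G v`. The elementary bound `2 - 2 cos θ ≤ 5θ² / (1 + θ²)` (it behaves like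
`θ²` near `0` and stays bounded) majorises its modulus by `5 (2πh)² K' / (1 + (2πhv)²)`, whose
integral over `ℝ` is `10 π² K' h`: no splitting of the integral at `|v| ≈ 1/h` is needed.
-/

open MeasureTheory Set Filter

open Real Complex FourierTransform

theorem Real.two_sub_two_cos_le (θ : ℝ) : 2 - 2 * Real.cos θ ≤ 5 * θ ^ 2 / (1 + θ ^ 2) := by
  rw [le_div_iff₀ (by positivity)]
  nlinarith [Real.one_sub_sq_div_two_le_cos (x := θ), Real.neg_one_le_cos θ, sq_nonneg θ]

theorem integral_inv_one_add_mul_sq (a : ℝ) :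
    ∫ v : ℝ, (1 + (a * v) ^ 2)⁻¹ = π / |a| := by
  rw [Measure.integral_comp_mul_left (fun v => (1 + v ^ 2)⁻¹), integral_univ_inv_one_add_sq,
    abs_inv, smul_eq_mul, inv_mul_eq_div]

theorem Complex.exp_second_diff_ofReal_mul_I (a θ : ℝ) :
    exp (↑(a + θ) * I) - 2 * exp (↑a * I) + exp (↑(a - θ) * I) =
      ↑(2 * Real.cos θ - 2) * exp (↑a * I) := by
  push_cast
  rw [two_cos, sub_mul, add_mul, sub_eq_add_neg (_ * I), exp_add, exp_add, neg_mul]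
  ring

section SecondDifference

variable {E : Type*} [NormedAddCommGroup E] [NormedSpace ℂ E] {G : ℝ → E}

theorem Real.integrable_exp_smul (hG : Integrable G) (w : ℝ) :
    Integrable fun v : ℝ => Complex.exp (↑(-2 * π * v * w) * I) • G v := by
  simpa [Circle.smul_def, Real.fourierChar_apply, mul_comm w, mul_assoc] using
    (Real.fourierIntegral_convergent_iff w).2 hG

theorem Real.fourier_second_diff_eq (hG : Integrable G) (x h : ℝ) :
    𝓕 G (x - h) - (2 : ℂ) • 𝓕 G x + 𝓕 G (x + h) =
      ∫ v : ℝ,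
        (↑(2 * Real.cos (2 * π * v * h) - 2) * Complex.exp (↑(-2 * π * v * x) * I)) • G v := by
  have hint := Real.integrable_exp_smul hG
  have hint₂ : Integrable fun v : ℝ => (2 : ℂ) • Complex.exp (↑(-2 * π * v * x) * I) • G v :=
    (hint x).smul 2
  simp_rw [fourier_real_eq_integral_exp_smul]
  rw [← integral_smul, ← integral_sub (hint _) hint₂,
    ← integral_add (by exact (hint _).sub hint₂) (hint _)]
  congr 1 with v
  rw [← Complex.exp_second_diff_ofReal_mul_I, smul_smul, ← sub_smul, ← add_smul]
  congr 4 <;> push_cast <;> ring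

theorem norm_second_diff_integrand_le {K : ℝ} (hK : ∀ v, v ≠ 0 → ‖G v‖ ≤ K / v ^ 2)
    (x h v : ℝ) :
    ‖(↑(2 * Real.cos (2 * π * v * h) - 2) * Complex.exp (↑(-2 * π * v * x) * I)) • G v‖ ≤
      5 * (2 * π * h) ^ 2 * K * (1 + (2 * π * h * v) ^ 2)⁻¹ := by
  have hK₀ : 0 ≤ K := by simpa using (norm_nonneg _).trans (hK 1 one_ne_zero)
  rw [norm_smul, norm_mul, Complex.norm_exp_ofReal_mul_I, mul_one, Complex.norm_real,
    Real.norm_of_nonpos (by linarith [Real.cos_le_one (2 * π * v * h)]), neg_sub]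
  rcases eq_or_ne v 0 with rfl | hv
  · norm_num
    positivity
  calc (2 - 2 * Real.cos (2 * π * v * h)) * ‖G v‖
      ≤ 5 * (2 * π * h * v) ^ 2 / (1 + (2 * π * h * v) ^ 2) * (K / v ^ 2) := by
        gcongr
        · exact (Real.two_sub_two_cos_le _).trans_eq (by ring_nf)
        · exact hK v hv
    _ = 5 * (2 * π * h) ^ 2 * K * (1 + (2 * π * h * v) ^ 2)⁻¹ := by
        field_simp

theorem Real.norm_fourier_second_diff_le (hG : Integrable G) {K : ℝ}
    (hK : ∀ v, v ≠ 0 → ‖G v‖ ≤ K / v ^ 2) (x : ℝ) {h : ℝ} (hh : 0 < h) :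
    ‖𝓕 G (x - h) - (2 : ℂ) • 𝓕 G x + 𝓕 G (x + h)‖ ≤ 10 * π ^ 2 * K * h := by
  have hbound : Integrable fun v : ℝ => 5 * (2 * π * h) ^ 2 * K * (1 + (2 * π * h * v) ^ 2)⁻¹ :=
    (integrable_inv_one_add_sq.comp_mul_left' (by positivity)).const_mul _
  calc _ ≤ ∫ v : ℝ, 5 * (2 * π * h) ^ 2 * K * (1 + (2 * π * h * v) ^ 2)⁻¹ := by
        rw [Real.fourier_second_diff_eq hG]
        exact norm_integral_le_of_norm_le hbound
          (ae_of_all _ (norm_second_diff_integrand_le hK x h))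
    _ = 10 * π ^ 2 * K * h := by
        rw [integral_const_mul, integral_inv_one_add_mul_sq, abs_of_pos (by positivity)]
        field_simp
        ring

end SecondDifference

theorem integrable_norm_pow_mul_norm_of_decay {E : Type*} [NormedAddCommGroup E] {g : ℝ → E}
    (hg : Continuous g) {K : ℝ} {n : ℕ} (hdecay : ∀ v, v ≠ 0 → ‖g v‖ ≤ K / |v| ^ (n + 2))
    {k : ℕ} (hk : k ≤ n) : Integrable fun v : ℝ => ‖v‖ ^ k * ‖g v‖ := by
  refine (by fun_prop : Continuous fun v : ℝ => ‖v‖ ^ k * ‖g v‖).locallyIntegrable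
    |>.integrable_of_isBigO_cocompact (g := fun v : ℝ => (1 + v ^ 2)⁻¹) ?_
      (integrable_inv_one_add_sq.integrableAtFilter _)
  have hK : 0 ≤ K := by simpa using (norm_nonneg _).trans (hdecay 1 one_ne_zero)
  refine Asymptotics.IsBigO.of_bound (2 * K) ?_
  filter_upwards [tendsto_norm_cocompact_atTop.eventually_ge_atTop 1] with v hv
  rw [Real.norm_eq_abs] at hv
  have hv₀ : v ≠ 0 := by rintro rfl; norm_num at hv
  simp only [norm_mul, norm_pow, norm_inv, Real.norm_eq_abs, abs_abs, abs_norm,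
    abs_of_pos (by positivity : (0 : ℝ) < 1 + v ^ 2)]
  calc |v| ^ k * ‖g v‖ ≤ |v| ^ n * (K / |v| ^ (n + 2)) := by
        gcongr
        exact hdecay v hv₀
    _ = K / v ^ 2 := by
        rw [pow_add, sq_abs]
        field_simp
    _ ≤ 2 * K * (1 + v ^ 2)⁻¹ := by
        rw [← div_eq_mul_inv, div_le_div_iff₀ (by positivity) (by positivity)]
        nlinarith [one_le_sq_iff_one_le_abs v |>.2 hv]

theorem norm_neg_two_pi_I_mul_pow_smul (g : ℝ → ℂ) (n : ℕ) (v : ℝ) :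
    ‖(-2 * π * I * v) ^ n • g v‖ = (2 * π) ^ n * (‖v‖ ^ n * ‖g v‖) := by
  simp [mul_pow, abs_of_pos pi_pos]
  ring

section Decay

variable {g : ℝ → ℂ} {K : ℝ} {n : ℕ}
  (hdecay : ∀ v, v ≠ 0 → ‖g v‖ ≤ K / |v| ^ (n + 2))
include hdecay

theorem norm_neg_two_pi_I_mul_pow_smul_le_of_decay (v : ℝ) (hv : v ≠ 0) :
    ‖(-2 * π * I * v) ^ n • g v‖ ≤ (2 * π) ^ n * K / v ^ 2 := by
  rw [norm_neg_two_pi_I_mul_pow_smul, Real.norm_eq_abs]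
  calc (2 * π) ^ n * (|v| ^ n * ‖g v‖) ≤ (2 * π) ^ n * (|v| ^ n * (K / |v| ^ (n + 2))) := by
        gcongr
        exact hdecay v hv
    _ = (2 * π) ^ n * K / v ^ 2 := by
        rw [pow_add, sq_abs]
        field_simp

variable (hg : Continuous g)
include hg

theorem integrable_pow_smul_of_decay {k : ℕ} (hk : k ≤ n) :
    Integrable fun v : ℝ => v ^ k • g v := by
  refine (integrable_norm_iff (by fun_prop)).1 ?_
  simpa only [norm_smul, norm_pow] using integrable_norm_pow_mul_norm_of_decay hg hdecay hk

theorem integrable_neg_two_pi_I_mul_pow_smul_of_decay :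
    Integrable fun v : ℝ => (-2 * π * I * v) ^ n • g v := by
  refine (integrable_norm_iff (by fun_prop)).1 ?_
  simpa only [norm_neg_two_pi_I_mul_pow_smul] using
    (integrable_norm_pow_mul_norm_of_decay hg hdecay le_rfl).const_mul ((2 * π) ^ n)

theorem contDiff_fourierInv_of_decay : ContDiff ℝ n (𝓕⁻ g) := by
  rw [show 𝓕⁻ g = fun x => 𝓕 g (-x) from funext (Real.fourierInv_eq_fourier_neg g)]
  exact (Real.contDiff_fourier fun k hk =>
    integrable_norm_pow_mul_norm_of_decay hg hdecay (by exact_mod_cast hk)).comp contDiff_neg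

theorem iteratedDeriv_fourierInv_of_decay (x : ℝ) :
    iteratedDeriv n (𝓕⁻ g) x =
      (-1 : ℝ) ^ n • 𝓕 (fun v : ℝ => (-2 * π * I * v) ^ n • g v) (-x) := by
  rw [show 𝓕⁻ g = fun x => 𝓕 g (-x) from funext (Real.fourierInv_eq_fourier_neg g),
    iteratedDeriv_comp_neg, Real.iteratedDeriv_fourier (N := n)
      (fun k hk => integrable_pow_smul_of_decay hdecay hg (by exact_mod_cast hk)) le_rfl]

theorem norm_iteratedDeriv_fourierInv_second_diff_le (t : ℝ) {h : ℝ} (hh : 0 < h) :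
    ‖iteratedDeriv n (𝓕⁻ g) (t + h) - 2 * iteratedDeriv n (𝓕⁻ g) t +
      iteratedDeriv n (𝓕⁻ g) (t - h)‖ ≤ 10 * π ^ 2 * ((2 * π) ^ n * K) * h := by
  set G := fun v : ℝ => (-2 * π * I * v) ^ n • g v
  simp_rw [iteratedDeriv_fourierInv_of_decay hdecay hg]
  calc _ = ‖(-1 : ℝ) ^ n • (𝓕 G (-t - h) - (2 : ℂ) • 𝓕 G (-t) + 𝓕 G (-t + h))‖ := by
        rw [smul_add, smul_sub, smul_comm, neg_add', neg_sub', sub_neg_eq_add, smul_eq_mul]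
    _ ≤ 10 * π ^ 2 * ((2 * π) ^ n * K) * h := by
        rw [norm_smul, norm_pow, norm_neg, norm_one, one_pow, one_mul]
        exact Real.norm_fourier_second_diff_le
          (integrable_neg_two_pi_I_mul_pow_smul_of_decay hdecay hg)
          (norm_neg_two_pi_I_mul_pow_smul_le_of_decay hdecay) (-t) hh

end Decay

theorem fourier_eq_fourierT (f : ℝ → ℂ) (w : ℝ) : 𝓕 f w = fourierT f (2 * π * w) := by
  rw [Real.fourier_real_eq_integral_exp_smul, fourierT]
  congr 1 with t
  rw [smul_eq_mul, mul_comm]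
  congr 2
  push_cast
  ring

theorem norm_fourier_le_of_norm_fourierT_le {f : ℝ → ℂ} {C : ℝ} {m : ℕ}
    (hdecay : ∀ ξ : ℝ, ξ ≠ 0 → ‖fourierT f ξ‖ ≤ C / |ξ| ^ m) (w : ℝ) (hw : w ≠ 0) :
    ‖𝓕 f w‖ ≤ C / (2 * π) ^ m / |w| ^ m := by
  have := hdecay (2 * π * w) (by positivity)
  rwa [← fourier_eq_fourierT, abs_mul, abs_of_pos (by positivity), mul_pow, ← div_div] at this

/-- If `f : ℝ → ℂ` is continuous and integrable and its Fourier transform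
decays like `C/|ξ|^{α+1}` for an integer `α ≥ 1`, then `f ∈ Zyg(α, ℝ)`:
`f` is `(α-1)` times continuously differentiable and `f^{(α-1)}` satisfies the
Zygmund condition `|g(t+h) - 2g(t) + g(t-h)| ≤ A·h`. -/
theorem fourier_decay_implies_Zyg
    (α : ℕ) (hα : 1 ≤ α)
    (f : ℝ → ℂ) (hfc : Continuous f) (hfi : Integrable f)
    (C : ℝ) (hC : 0 < C)
    (hFT : ∀ ξ : ℝ, ξ ≠ 0 → ‖fourierT f ξ‖ ≤ C / |ξ| ^ ((α : ℝ) + 1)) :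
    ContDiff ℝ (α - 1 : ℕ) f ∧
    ∃ A : ℝ, 0 < A ∧ ∀ t h : ℝ, 0 < h →
      ‖iteratedDeriv (α - 1) f (t + h) - 2 * iteratedDeriv (α - 1) f t +
        iteratedDeriv (α - 1) f (t - h)‖ ≤ A * h := by
  obtain ⟨n, rfl⟩ : ∃ n, α = n + 1 := ⟨α - 1, by omega⟩
  rw [Nat.add_sub_cancel]
  have hdecay : ∀ w, w ≠ 0 → ‖𝓕 f w‖ ≤ C / (2 * π) ^ (n + 2) / |w| ^ (n + 2) := by
    refine norm_fourier_le_of_norm_fourierT_le fun ξ hξ => ?_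
    have hexp : ((n + 1 : ℕ) : ℝ) + 1 = ((n + 2 : ℕ) : ℝ) := by push_cast; ring
    simpa only [hexp, Real.rpow_natCast] using hFT ξ hξ
  have hcont : Continuous (𝓕 f) :=
    VectorFourier.fourierIntegral_continuous Real.continuous_fourierChar continuous_inner hfi
  have hint : Integrable (𝓕 f) := by
    simpa using integrable_pow_smul_of_decay hdecay hcont (Nat.zero_le n)
  rw [← hfc.fourierInv_fourier_eq hfi hint]
  exact ⟨contDiff_fourierInv_of_decay hdecay hcont, _, by positivity,
    fun t h hh => norm_iteratedDeriv_fourierInv_second_diff_le hdecay hcont t hh⟩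
end

section
/- Let ℓ ≥ −1/2 be a real number, let p ≥ 1 be an integer and C > 0. Let (a_n)_{n≥1} be a sequence of nonnegative real numbers such that ∑_{n=N+1}^{∞} a_n²/n ≤ C/N^{2ℓ+2p+2} for every integer N ≥ 1. Then there exists a constant C′ > 0, depending only on ℓ, p and C, such that ∑_{n=N+1}^{∞} a_n² · n^{2ℓ+1} ≤ C′/N^{2p} for every integer N ≥ 1. -/
open MeasureTheory Set Filter

/-!
Write `b n = a n ² / n`, so that the weighted terms are `b n · n ^ (2ℓ + 2)`. On a dyadic block
`(A, 2A]` the weight is at most `(2A) ^ (2ℓ + 2)`, and the tail hypothesis bounds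
`∑_{(A, 2A]} b n` by `C / A ^ (2ℓ + 2p + 2)`; so each block contributes at most
`2 ^ (2ℓ + 2) C / A ^ (2p)`. Over the blocks `(2ᵏN, 2ᵏ⁺¹N]` these bounds decay at least like
`2 ^ (-k)`, and the geometric series gives `C' = 2 · 2 ^ (2ℓ + 2) C`.
-/

open Finset

lemma sum_range_shift_eq_sum_Ioc {M : Type*} [AddCommMonoid M] (f : ℕ → M) (N K : ℕ) :
    ∑ n ∈ range K, f (N + 1 + n) = ∑ n ∈ Ioc N (N + K), f n := by
  rw [← Finset.Ico_add_one_add_one_eq_Ioc, sum_Ico_eq_sum_range]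
  congr 2
  omega

lemma tsum_ofReal_shift_le_ofReal_iff {f : ℕ → ℝ} (hf : ∀ n, 0 ≤ f n) {c : ℝ} (hc : 0 ≤ c)
    (N : ℕ) :
    ∑' n, ENNReal.ofReal (f (N + 1 + n)) ≤ ENNReal.ofReal c ↔
      ∀ M, ∑ n ∈ Ioc N M, f n ≤ c := by
  have partial_sum (K : ℕ) :
      ∑ n ∈ range K, ENNReal.ofReal (f (N + 1 + n)) ≤ ENNReal.ofReal c ↔
        ∑ n ∈ Ioc N (N + K), f n ≤ c := by
    rw [← ENNReal.ofReal_sum_of_nonneg fun n _ => hf _, ENNReal.ofReal_le_ofReal_iff hc,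
      sum_range_shift_eq_sum_Ioc]
  constructor
  · intro h M
    calc ∑ n ∈ Ioc N M, f n ≤ ∑ n ∈ Ioc N (N + M), f n :=
          sum_le_sum_of_subset_of_nonneg (Ioc_subset_Ioc_right (by omega)) fun n _ _ => hf n
      _ ≤ c := (partial_sum M).1 ((ENNReal.sum_le_tsum _).trans h)
  · exact fun h => ENNReal.tsum_le_of_sum_range_le fun K => (partial_sum K).2 (h _)

lemma sum_Ioc_eq_sum_range_sum_Ioc {M : Type*} [AddCommMonoid M] (f : ℕ → M) {u : ℕ → ℕ}
    (hu : Monotone u) (K : ℕ) :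
    ∑ n ∈ Ioc (u 0) (u K), f n = ∑ k ∈ range K, ∑ n ∈ Ioc (u k) (u (k + 1)), f n := by
  induction K with
  | zero => simp
  | succ K ih =>
    rw [sum_range_succ, ← ih, sum_Ioc_consecutive _ (hu K.zero_le) (hu K.le_succ)]

lemma sum_Ioc_le_of_dyadic_block_le {g : ℕ → ℝ} (hg : ∀ n, 0 ≤ g n) {q : ℕ} (hq : q ≠ 0)
    {D : ℝ} (hD : 0 ≤ D) (hblock : ∀ A, 1 ≤ A → ∑ n ∈ Ioc A (2 * A), g n ≤ D / (A : ℝ) ^ q)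
    {N : ℕ} (hN : 1 ≤ N) (M : ℕ) :
    ∑ n ∈ Ioc N M, g n ≤ 2 * D / (N : ℝ) ^ q := by
  have hN0 : (0 : ℝ) < N := by exact_mod_cast hN
  have block_le (k : ℕ) :
      ∑ n ∈ Ioc (2 ^ k * N) (2 ^ (k + 1) * N), g n ≤ (1 / 2) ^ k * (D / (N : ℝ) ^ q) := by
    have hpow : (2 : ℝ) ^ k * (N : ℝ) ^ q ≤ ((2 ^ k * N : ℕ) : ℝ) ^ q := by
      rw [Nat.cast_mul, Nat.cast_pow, Nat.cast_ofNat, mul_pow]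
      gcongr
      exact le_self_pow₀ (one_le_pow₀ one_le_two) hq
    calc ∑ n ∈ Ioc (2 ^ k * N) (2 ^ (k + 1) * N), g n ≤ D / ((2 ^ k * N : ℕ) : ℝ) ^ q := by
          rw [pow_succ', mul_assoc]
          exact hblock _ (Nat.one_le_iff_ne_zero.mpr (by positivity))
      _ ≤ D / ((2 : ℝ) ^ k * (N : ℝ) ^ q) := by gcongr
      _ = (1 / 2) ^ k * (D / (N : ℝ) ^ q) := by rw [one_div, inv_pow]; field_simp
  have hM : M ≤ 2 ^ M * N := (Nat.lt_two_pow_self).le.trans (Nat.le_mul_of_pos_right _ hN)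
  calc ∑ n ∈ Ioc N M, g n ≤ ∑ n ∈ Ioc N (2 ^ M * N), g n :=
        sum_le_sum_of_subset_of_nonneg (Ioc_subset_Ioc_right hM) fun n _ _ => hg n
    _ = ∑ k ∈ range M, ∑ n ∈ Ioc (2 ^ k * N) (2 ^ (k + 1) * N), g n := by
        simpa using sum_Ioc_eq_sum_range_sum_Ioc g (u := fun k => 2 ^ k * N)
          (fun i j hij => Nat.mul_le_mul_right N (Nat.pow_le_pow_right two_pos hij)) M
    _ ≤ (∑ k ∈ range M, (1 / 2 : ℝ) ^ k) * (D / (N : ℝ) ^ q) := by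
        rw [sum_mul]
        exact sum_le_sum fun k _ => block_le k
    _ ≤ 2 * D / (N : ℝ) ^ q := by
        rw [mul_div_assoc]
        exact mul_le_mul_of_nonneg_right (sum_geometric_two_le M) (by positivity)

lemma sum_Ioc_two_mul_mul_rpow_le {b : ℕ → ℝ} (hb : ∀ n, 0 ≤ b n) {s c : ℝ} (hs : 0 ≤ s)
    {q A : ℕ} (hA : 1 ≤ A) (htail : ∑ n ∈ Ioc A (2 * A), b n ≤ c / (A : ℝ) ^ (s + q)) :
    ∑ n ∈ Ioc A (2 * A), b n * (n : ℝ) ^ s ≤ 2 ^ s * c / (A : ℝ) ^ q := by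
  have hA0 : (0 : ℝ) < A := by exact_mod_cast hA
  calc ∑ n ∈ Ioc A (2 * A), b n * (n : ℝ) ^ s
      ≤ ∑ n ∈ Ioc A (2 * A), b n * (2 * A : ℝ) ^ s := by
        refine sum_le_sum fun n hn => mul_le_mul_of_nonneg_left ?_ (hb n)
        exact Real.rpow_le_rpow (Nat.cast_nonneg n) (by exact_mod_cast (mem_Ioc.1 hn).2) hs
    _ = (2 * A : ℝ) ^ s * ∑ n ∈ Ioc A (2 * A), b n := by
        rw [← sum_mul, mul_comm]
    _ ≤ (2 * A : ℝ) ^ s * (c / (A : ℝ) ^ (s + q)) := by gcongr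
    _ = 2 ^ s * c / (A : ℝ) ^ q := by
        rw [Real.mul_rpow zero_le_two hA0.le, Real.rpow_add hA0, Real.rpow_natCast]
        have : (A : ℝ) ^ s ≠ 0 := (Real.rpow_pos_of_pos hA0 s).ne'
        field_simp

theorem dyadic_weighted_tail_estimate_general
    (l : ℝ) (hl : -(1/2 : ℝ) ≤ l) (p : ℕ) (hp : 1 ≤ p) (C : ℝ) (hC : 0 < C)
    (a : ℕ → ℝ)
    (htail : ∀ N : ℕ, 1 ≤ N →
      ∑' n : ℕ, ENNReal.ofReal ((a (N + 1 + n)) ^ 2 / ((N : ℝ) + 1 + n)) ≤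
        ENNReal.ofReal (C / (N : ℝ) ^ (2 * l + 2 * (p : ℝ) + 2))) :
    ∃ C' : ℝ, 0 < C' ∧ ∀ N : ℕ, 1 ≤ N →
      ∑' n : ℕ, ENNReal.ofReal ((a (N + 1 + n)) ^ 2 * ((N : ℝ) + 1 + n) ^ (2 * l + 1)) ≤
        ENNReal.ofReal (C' / (N : ℝ) ^ (2 * p)) := by
  set b : ℕ → ℝ := fun n => a n ^ 2 / n
  set g : ℕ → ℝ := fun n => a n ^ 2 * (n : ℝ) ^ (2 * l + 1)
  have hb (n : ℕ) : 0 ≤ b n := by positivity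
  have hg (n : ℕ) : 0 ≤ g n := by positivity
  have hg_eq {n : ℕ} (hn : 0 < n) : g n = b n * (n : ℝ) ^ (2 * l + 2) := by
    have hn0 : (n : ℝ) ≠ 0 := by positivity
    simp only [g, b]
    rw [show 2 * l + 1 = 2 * l + 2 - 1 by ring, Real.rpow_sub_one hn0]
    ring
  have hblock (A : ℕ) (hA : 1 ≤ A) :
      ∑ n ∈ Ioc A (2 * A), g n ≤ 2 ^ (2 * l + 2) * C / (A : ℝ) ^ (2 * p) := by
    rw [sum_congr rfl fun n hn => hg_eq (by linarith [(mem_Ioc.1 hn).1])]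
    refine sum_Ioc_two_mul_mul_rpow_le hb (by linarith) hA ?_
    have hexp : 2 * l + 2 + ((2 * p : ℕ) : ℝ) = 2 * l + 2 * (p : ℝ) + 2 := by push_cast; ring
    rw [hexp]
    refine (tsum_ofReal_shift_le_ofReal_iff hb (by positivity) A).1 ?_ (2 * A)
    simpa only [b, Nat.cast_add, Nat.cast_one] using htail A hA
  refine ⟨2 * (2 ^ (2 * l + 2) * C), by positivity, fun N hN => ?_⟩
  have hsum := sum_Ioc_le_of_dyadic_block_le hg (by omega) (by positivity) hblock hN
  simpa only [g, Nat.cast_add, Nat.cast_one] using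
    (tsum_ofReal_shift_le_ofReal_iff hg (by positivity) N).2 hsum

/-- dyadic summation estimate. If `a_n ≥ 0` and
`∑_{n=N+1}^∞ a_n²/n ≤ C/N^{2ℓ+2p+2}` for all `N ≥ 1`, then there is `C' > 0`
(depending only on `ℓ, p, C`) with `∑_{n=N+1}^∞ a_n² n^{2ℓ+1} ≤ C'/N^{2p}` for all `N ≥ 1`. -/
theorem dyadic_weighted_tail_estimate
    (l : ℝ) (hl : -(1/2 : ℝ) ≤ l) (p : ℕ) (hp : 1 ≤ p) (C : ℝ) (hC : 0 < C)
    (a : ℕ → ℝ) (ha : ∀ n, 0 ≤ a n)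
    (htail : ∀ N : ℕ, 1 ≤ N →
      ∑' n : ℕ, ENNReal.ofReal ((a (N + 1 + n)) ^ 2 / ((N : ℝ) + 1 + n)) ≤
        ENNReal.ofReal (C / (N : ℝ) ^ (2 * l + 2 * (p : ℝ) + 2))) :
    ∃ C' : ℝ, 0 < C' ∧ ∀ N : ℕ, 1 ≤ N →
      ∑' n : ℕ, ENNReal.ofReal ((a (N + 1 + n)) ^ 2 * ((N : ℝ) + 1 + n) ^ (2 * l + 1)) ≤
        ENNReal.ofReal (C' / (N : ℝ) ^ (2 * p)) :=
  dyadic_weighted_tail_estimate_general l hl p hp C hC a htail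
end
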